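/- Let X, Y be Hilbert spaces, B : X → X and R : Y → Y positive self-adjoint boundedly invertible, A : X → Y bounded linear, and K = B A*(R + A B A*)^{-1}. Then for any φ₀ ∈ X and f ∈ Y, the Kalman update φ₁ = φ₀ + K(f − Aφ₀) is the unique minimizer over φ ∈ X of the functional J(φ) = ⟨R^{-1}(Aφ − f), Aφ − f⟩ + ⟨B^{-1}(φ − φ₀), φ − φ₀⟩. -/

import Mathlib

open ContinuousLinearMap
open scoped InnerProductSpace

/-!
Write `J` for the functional and `∇J(φ) = A* R⁻¹(Aφ − f) + B⁻¹(φ − φ₀)`. Since `R⁻¹` and `B⁻¹`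
are self-adjoint, `J(φ + e) = J(φ) + 2 Re ⟪∇J(φ), e⟫ + ⟪R⁻¹ A e, A e⟫ + ⟪B⁻¹ e, e⟫`.
With `u = (R + A B A*)⁻¹ (f − Aφ₀)` the Kalman update satisfies `φ₁ − φ₀ = B A* u` and
`Aφ₁ − f = −R u`, so `∇J(φ₁) = −A* u + A* u = 0`. The remaining quadratic term is positive
for `e ≠ 0`: `B⁻¹ = (B⁻¹)* B B⁻¹` is positive and injective, and a positive operator `T` with
`Re ⟪T z, z⟫ = 0` kills `z`, because `⟪T z, z⟫ = ‖√T z‖²`.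
-/

section

variable {𝕜 E : Type*} [RCLike 𝕜] [NormedAddCommGroup E] [InnerProductSpace 𝕜 E]
  [CompleteSpace E]

theorem IsSelfAdjoint.re_inner_map_add_add {T : E →L[𝕜] E} (hT : IsSelfAdjoint T) (u v : E) :
    RCLike.re ⟪T (u + v), u + v⟫_𝕜 =
      RCLike.re ⟪T u, u⟫_𝕜 + 2 * RCLike.re ⟪T u, v⟫_𝕜 + RCLike.re ⟪T v, v⟫_𝕜 := by
  have hvu : RCLike.re ⟪T v, u⟫_𝕜 = RCLike.re ⟪T u, v⟫_𝕜 := by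
    rw [show ⟪T v, u⟫_𝕜 = ⟪v, T u⟫_𝕜 from hT.isSymmetric v u, inner_re_symm]
  simp only [map_add, inner_add_left, inner_add_right, hvu]
  ring

theorem ContinuousLinearMap.IsPositive.isPositive_of_comp_eq_id {T S : E →L[𝕜] E}
    (hT : T.IsPositive) (hTS : T ∘L S = .id 𝕜 E) : S.IsPositive := by
  have hS := hT.adjoint_conj S
  rw [hTS, comp_id] at hS
  rwa [← adjoint_adjoint S, hS.isSelfAdjoint.adjoint_eq]

end

namespace ContinuousLinearMap.IsPositive

variable {H : Type*} [NormedAddCommGroup H] [InnerProductSpace ℂ H] [CompleteSpace H]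
  {T : H →L[ℂ] H}

theorem apply_eq_zero_of_re_inner_eq_zero (hT : T.IsPositive) {z : H}
    (hz : (⟪T z, z⟫_ℂ).re = 0) : T z = 0 := by
  set S := CFC.sqrt T
  have hST : S * S = T := CFC.sqrt_mul_sqrt_self T ((nonneg_iff_isPositive T).mpr hT)
  have hS : IsSelfAdjoint S := (CFC.sqrt_nonneg T).isSelfAdjoint
  have hSz : S z = 0 := by
    have hsymm : ⟪S (S z), z⟫_ℂ = ⟪S z, S z⟫_ℂ := hS.isSymmetric (S z) z
    rw [← hST, mul_apply_eq_comp, hsymm, ← RCLike.re_to_complex, inner_self_eq_norm_sq] at hz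
    simpa using hz
  rw [← hST, mul_apply_eq_comp, hSz, map_zero]

theorem re_inner_pos_of_injective (hT : T.IsPositive) (hinj : Function.Injective T) {z : H}
    (hz : z ≠ 0) : 0 < (⟪T z, z⟫_ℂ).re := by
  refine (hT.re_inner_nonneg_left z).lt_of_ne fun h => hz (hinj ?_)
  rw [hT.apply_eq_zero_of_re_inner_eq_zero h.symm, map_zero]

end ContinuousLinearMap.IsPositive

section Tikhonov

variable {𝕜 E F : Type*} [RCLike 𝕜] [NormedAddCommGroup E] [InnerProductSpace 𝕜 E]
  [NormedAddCommGroup F] [InnerProductSpace 𝕜 F]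

def tikhonovFunctional (A : E →L[𝕜] F) (Rinv : F →L[𝕜] F) (Binv : E →L[𝕜] E) (f : F)
    (φ₀ φ : E) : ℝ :=
  RCLike.re ⟪Rinv (A φ - f), A φ - f⟫_𝕜 + RCLike.re ⟪Binv (φ - φ₀), φ - φ₀⟫_𝕜

variable [CompleteSpace E] [CompleteSpace F]

theorem tikhonovFunctional_add {A : E →L[𝕜] F} {Rinv : F →L[𝕜] F} {Binv : E →L[𝕜] E}
    (hRinv : IsSelfAdjoint Rinv) (hBinv : IsSelfAdjoint Binv) (f : F) (φ₀ φ e : E) :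
    tikhonovFunctional A Rinv Binv f φ₀ (φ + e) =
      tikhonovFunctional A Rinv Binv f φ₀ φ
        + 2 * RCLike.re ⟪adjoint A (Rinv (A φ - f)) + Binv (φ - φ₀), e⟫_𝕜
        + (RCLike.re ⟪Rinv (A e), A e⟫_𝕜 + RCLike.re ⟪Binv e, e⟫_𝕜) := by
  have hAe : A (φ + e) - f = (A φ - f) + A e := by rw [map_add]; abel
  have hφe : φ + e - φ₀ = (φ - φ₀) + e := by abel
  rw [tikhonovFunctional, tikhonovFunctional, hAe, hφe, hRinv.re_inner_map_add_add,
    hBinv.re_inner_map_add_add, inner_add_left, map_add, adjoint_inner_left]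
  ring

theorem kalman_gradient_eq_zero {A : E →L[𝕜] F} {B Binv : E →L[𝕜] E} {R Rinv Sinv : F →L[𝕜] F}
    (hRinv : Rinv ∘L R = .id 𝕜 F) (hBinv : Binv ∘L B = .id 𝕜 E)
    (hSinv : (R + A ∘L (B ∘L adjoint A)) ∘L Sinv = .id 𝕜 F) {φ₀ φ₁ : E} {f : F}
    (hφ₁ : φ₁ = φ₀ + (B ∘L adjoint A ∘L Sinv) (f - A φ₀)) :
    adjoint A (Rinv (A φ₁ - f)) + Binv (φ₁ - φ₀) = 0 := by
  have hu : R (Sinv (f - A φ₀)) + A (B (adjoint A (Sinv (f - A φ₀)))) = f - A φ₀ :=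
    congr($hSinv (f - A φ₀))
  rw [comp_apply, comp_apply] at hφ₁
  generalize Sinv (f - A φ₀) = u at hu hφ₁
  subst hφ₁
  have hres : A (φ₀ + B (adjoint A u)) - f = -R u := by
    rw [← eq_sub_iff_add_eq.mp hu, map_add]
    abel
  rw [hres, add_sub_cancel_left, map_neg, show Rinv (R u) = u from congr($hRinv u),
    show Binv (B (adjoint A u)) = adjoint A u from congr($hBinv (adjoint A u)), map_neg,
    neg_add_cancel]

end Tikhonov

theorem tikhonovFunctional_lt_of_gradient_eq_zero {E F : Type*}
    [NormedAddCommGroup E] [InnerProductSpace ℂ E] [CompleteSpace E]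
    [NormedAddCommGroup F] [InnerProductSpace ℂ F] [CompleteSpace F]
    {A : E →L[ℂ] F} {Rinv : F →L[ℂ] F} {Binv : E →L[ℂ] E}
    (hRinv : Rinv.IsPositive) (hBinv : Binv.IsPositive) (hBinv_inj : Function.Injective Binv)
    {f : F} {φ₀ φ : E} (hgrad : adjoint A (Rinv (A φ - f)) + Binv (φ - φ₀) = 0)
    {ψ : E} (hψ : ψ ≠ φ) :
    tikhonovFunctional A Rinv Binv f φ₀ φ < tikhonovFunctional A Rinv Binv f φ₀ ψ := by
  obtain ⟨e, rfl⟩ : ∃ e, ψ = φ + e := ⟨ψ - φ, by abel⟩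
  have he : e ≠ 0 := fun h => hψ (by rw [h, add_zero])
  rw [tikhonovFunctional_add hRinv.isSelfAdjoint hBinv.isSelfAdjoint, hgrad, inner_zero_left,
    map_zero, mul_zero, add_zero, RCLike.re_to_complex, RCLike.re_to_complex]
  have hAe : 0 ≤ (⟪Rinv (A e), A e⟫_ℂ).re := hRinv.re_inner_nonneg_left (A e)
  have he_pos := hBinv.re_inner_pos_of_injective hBinv_inj he
  linarith

theorem kalman_update_unique_minimizer_general
    {X Y : Type*} [NormedAddCommGroup X] [InnerProductSpace ℂ X] [CompleteSpace X]
    [NormedAddCommGroup Y] [InnerProductSpace ℂ Y] [CompleteSpace Y]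
    (A : X →L[ℂ] Y) (B : X →L[ℂ] X) (R : Y →L[ℂ] Y)
    (hB : B.IsPositive) (hR : R.IsPositive)
    (Binv : X →L[ℂ] X) (hBinv₁ : Binv.comp B = ContinuousLinearMap.id ℂ X)
    (hBinv₂ : B.comp Binv = ContinuousLinearMap.id ℂ X)
    (Rinv : Y →L[ℂ] Y) (hRinv₁ : Rinv.comp R = ContinuousLinearMap.id ℂ Y)
    (hRinv₂ : R.comp Rinv = ContinuousLinearMap.id ℂ Y)
    (Sinv : Y →L[ℂ] Y)
    (hSinv₂ : (R + A.comp (B.comp (adjoint A))).comp Sinv = ContinuousLinearMap.id ℂ Y)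
    (K : Y →L[ℂ] X) (hK : K = B.comp ((adjoint A).comp Sinv))
    (φ₀ : X) (f : Y) (φ₁ : X) (hφ₁ : φ₁ = φ₀ + K (f - A φ₀)) :
    ∀ φ : X, φ ≠ φ₁ →
      (⟪Rinv (A φ₁ - f), A φ₁ - f⟫_ℂ).re + (⟪Binv (φ₁ - φ₀), φ₁ - φ₀⟫_ℂ).re <
      (⟪Rinv (A φ - f), A φ - f⟫_ℂ).re + (⟪Binv (φ - φ₀), φ - φ₀⟫_ℂ).re := by
  subst hK
  intro φ hφ
  have hBinv : Binv.IsPositive := hB.isPositive_of_comp_eq_id hBinv₂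
  have hRinv : Rinv.IsPositive := hR.isPositive_of_comp_eq_id hRinv₂
  have hBinv_inj : Function.Injective Binv :=
    Function.LeftInverse.injective fun x => congr($hBinv₂ x)
  exact tikhonovFunctional_lt_of_gradient_eq_zero hRinv hBinv hBinv_inj
    (kalman_gradient_eq_zero hRinv₁ hBinv₁ hSinv₂ hφ₁) hφ

/-- The Kalman update `φ₁ = φ₀ + K(f − Aφ₀)` with gain `K = B A* (R + A B A*)⁻¹` is the
unique minimizer over `X` of the weighted Tikhonov functional
`J(φ) = ⟨R⁻¹(Aφ − f), Aφ − f⟩ + ⟨B⁻¹(φ − φ₀), φ − φ₀⟩`. -/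
theorem kalman_update_unique_minimizer
    {X Y : Type*} [NormedAddCommGroup X] [InnerProductSpace ℂ X] [CompleteSpace X]
    [NormedAddCommGroup Y] [InnerProductSpace ℂ Y] [CompleteSpace Y]
    (A : X →L[ℂ] Y) (B : X →L[ℂ] X) (R : Y →L[ℂ] Y)
    (hB : B.IsPositive) (hR : R.IsPositive)
    (Binv : X →L[ℂ] X) (hBinv₁ : Binv.comp B = ContinuousLinearMap.id ℂ X)
    (hBinv₂ : B.comp Binv = ContinuousLinearMap.id ℂ X)
    (Rinv : Y →L[ℂ] Y) (hRinv₁ : Rinv.comp R = ContinuousLinearMap.id ℂ Y)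
    (hRinv₂ : R.comp Rinv = ContinuousLinearMap.id ℂ Y)
    (Sinv : Y →L[ℂ] Y)
    (hSinv₁ : Sinv.comp (R + A.comp (B.comp (adjoint A))) = ContinuousLinearMap.id ℂ Y)
    (hSinv₂ : (R + A.comp (B.comp (adjoint A))).comp Sinv = ContinuousLinearMap.id ℂ Y)
    (K : Y →L[ℂ] X) (hK : K = B.comp ((adjoint A).comp Sinv))
    (φ₀ : X) (f : Y) (φ₁ : X) (hφ₁ : φ₁ = φ₀ + K (f - A φ₀)) :
    ∀ φ : X, φ ≠ φ₁ →
      (⟪Rinv (A φ₁ - f), A φ₁ - f⟫_ℂ).re + (⟪Binv (φ₁ - φ₀), φ₁ - φ₀⟫_ℂ).re <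
      (⟪Rinv (A φ - f), A φ - f⟫_ℂ).re + (⟪Binv (φ - φ₀), φ - φ₀⟫_ℂ).re :=
  kalman_update_unique_minimizer_general A B R hB hR Binv hBinv₁ hBinv₂ Rinv hRinv₁ hRinv₂ Sinv
    hSinv₂ K hK φ₀ f φ₁ hφ₁
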